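/- Let A, B be bounded lattices with |A| > 2 and |B| > 2 such that (0 is meet-reducible in A or 1 is join-reducible in B) and (0 is meet-reducible in B or 1 is join-reducible in A). Then every congruence of A ⊞ B other than ∇ has singleton classes at 0 and 1; in particular A ⊞ B has no two-class congruences and no prime filters. -/
import Mathlib


/-- A filter of a lattice: a nonempty, upward-closed subset closed under binary meets. -/
def IsLatFilter {L : Type*} [Lattice L] (F : Set L) : Prop :=
  F.Nonempty ∧ (∀ x ∈ F, ∀ y : L, x ≤ y → y ∈ F) ∧ (∀ x ∈ F, ∀ y ∈ F, x ⊓ y ∈ F)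

/-- An ideal of a lattice: a nonempty, downward-closed subset closed under binary joins. -/
def IsLatIdeal {L : Type*} [Lattice L] (I : Set L) : Prop :=
  I.Nonempty ∧ (∀ x ∈ I, ∀ y : L, y ≤ x → y ∈ I) ∧ (∀ x ∈ I, ∀ y ∈ I, x ⊔ y ∈ I)

/-- A prime filter: a proper filter such that `x ⊔ y ∈ P` implies `x ∈ P` or `y ∈ P`. -/
def IsPrimeFilter {L : Type*} [Lattice L] (P : Set L) : Prop :=
  IsLatFilter P ∧ P ≠ Set.univ ∧ ∀ x y : L, x ⊔ y ∈ P → x ∈ P ∨ y ∈ P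

/-- A prime ideal: a proper ideal such that `x ⊓ y ∈ I` implies `x ∈ I` or `y ∈ I`. -/
def IsPrimeIdeal {L : Type*} [Lattice L] (I : Set L) : Prop :=
  IsLatIdeal I ∧ I ≠ Set.univ ∧ ∀ x y : L, x ⊓ y ∈ I → x ∈ I ∨ y ∈ I

/-- A lattice congruence: an equivalence relation compatible with `⊔` and `⊓`. -/
def IsLatCong {L : Type*} [Lattice L] (θ : L → L → Prop) : Prop :=
  Equivalence θ ∧ ∀ a b c d : L, θ a b → θ c d → θ (a ⊔ c) (b ⊔ d) ∧ θ (a ⊓ c) (b ⊓ d)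

/-- `C` is the horizontal sum of its subsets `A` and `B`: both are bounded sublattices,
they cover `C`, they intersect exactly in `{⊥, ⊤}`, and elements of `A \ {⊥, ⊤}` are
incomparable with elements of `B \ {⊥, ⊤}`. -/
structure IsHorizSum {C : Type*} [Lattice C] [BoundedOrder C] (A B : Set C) : Prop where
  botA : ⊥ ∈ A
  topA : ⊤ ∈ A
  botB : ⊥ ∈ B
  topB : ⊤ ∈ B
  subA : ∀ x ∈ A, ∀ y ∈ A, x ⊓ y ∈ A ∧ x ⊔ y ∈ A
  subB : ∀ x ∈ B, ∀ y ∈ B, x ⊓ y ∈ B ∧ x ⊔ y ∈ B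
  union : A ∪ B = Set.univ
  inter : A ∩ B = {⊥, ⊤}
  incomp : ∀ a ∈ A, a ≠ ⊥ → a ≠ ⊤ → ∀ b ∈ B, b ≠ ⊥ → b ≠ ⊤ → ¬ a ≤ b ∧ ¬ b ≤ a

/-- Horizontal sums are symmetric. -/
lemma IsHorizSum.symm {C : Type*} [Lattice C] [BoundedOrder C] {A B : Set C}
    (h : IsHorizSum A B) : IsHorizSum B A where
  botA := h.botB
  topA := h.topB
  botB := h.botA
  topB := h.topA
  subA := h.subB
  subB := h.subA
  union := by rw [Set.union_comm]; exact h.union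
  inter := by rw [Set.inter_comm]; exact h.inter
  incomp := fun b hb hb0 hb1 a ha ha0 ha1 =>
    ⟨(h.incomp a ha ha0 ha1 b hb hb0 hb1).2, (h.incomp a ha ha0 ha1 b hb hb0 hb1).1⟩

lemma horiz_mixed_sup {C : Type*} [Lattice C] [BoundedOrder C] {A B : Set C}
    (hAB : IsHorizSum A B) {a b : C} (ha : a ∈ A) (ha0 : a ≠ ⊥) (ha1 : a ≠ ⊤)
    (hb : b ∈ B) (hb0 : b ≠ ⊥) (hb1 : b ≠ ⊤) : a ⊔ b = ⊤ := by
  have hs : a ⊔ b ∈ A ∪ B := by rw [hAB.union]; trivial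
  by_contra h
  have hs0 : a ⊔ b ≠ ⊥ := fun hbot => ha0 (le_bot_iff.mp (hbot ▸ le_sup_left))
  rcases hs with hsA | hsB
  · exact (hAB.incomp _ hsA hs0 h b hb hb0 hb1).2 le_sup_right
  · exact (hAB.incomp a ha ha0 ha1 _ hsB hs0 h).1 le_sup_left

lemma horiz_mixed_inf {C : Type*} [Lattice C] [BoundedOrder C] {A B : Set C}
    (hAB : IsHorizSum A B) {a b : C} (ha : a ∈ A) (ha0 : a ≠ ⊥) (ha1 : a ≠ ⊤)
    (hb : b ∈ B) (hb0 : b ≠ ⊥) (hb1 : b ≠ ⊤) : a ⊓ b = ⊥ := by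
  have hs : a ⊓ b ∈ A ∪ B := by rw [hAB.union]; trivial
  by_contra h
  have hs1 : a ⊓ b ≠ ⊤ := fun htop => ha1 (top_le_iff.mp (htop ▸ inf_le_left))
  rcases hs with hsA | hsB
  · exact (hAB.incomp _ hsA h hs1 b hb hb0 hb1).1 inf_le_right
  · exact (hAB.incomp a ha ha0 ha1 _ hsB h hs1).2 inf_le_left

/-- Key spreading lemma: a congruence collapsing a nontrivial element of `A` with `⊥`
collapses `⊥` and `⊤`, assuming (`⊥` meet-reducible in `B` or `⊤` join-reducible in `A`). -/
lemma horiz_spread {C : Type*} [Lattice C] [BoundedOrder C] {A B : Set C}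
    (hAB : IsHorizSum A B)
    (hB : ∃ b ∈ B, b ≠ ⊥ ∧ b ≠ ⊤)
    (h2 : (∃ x ∈ B, ∃ y ∈ B, x ≠ ⊥ ∧ y ≠ ⊥ ∧ x ⊓ y = ⊥) ∨
          (∃ x ∈ A, ∃ y ∈ A, x ≠ ⊤ ∧ y ≠ ⊤ ∧ x ⊔ y = ⊤))
    {θ : C → C → Prop} (hθ : IsLatCong θ)
    {c : C} (hcA : c ∈ A) (hc0 : c ≠ ⊥) (hc1 : c ≠ ⊤) (hcθ : θ c ⊥) : θ ⊥ ⊤ := by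
  obtain ⟨b0, hb0B, hb00, hb01⟩ := hB
  -- θ ⊤ b for every nontrivial b ∈ B
  have hTb : ∀ b ∈ B, b ≠ ⊥ → b ≠ ⊤ → θ ⊤ b := by
    intro b hbB hb0 hb1
    have h := (hθ.2 c ⊥ b b hcθ (hθ.1.refl b)).1
    rwa [horiz_mixed_sup hAB hcA hc0 hc1 hbB hb0 hb1, bot_sup_eq] at h
  -- θ a ⊥ for every nontrivial a ∈ A
  have haB : ∀ a ∈ A, a ≠ ⊥ → a ≠ ⊤ → θ a ⊥ := by
    intro a haA ha0 ha1
    have h := (hθ.2 ⊤ b0 a a (hTb b0 hb0B hb00 hb01) (hθ.1.refl a)).2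
    rwa [top_inf_eq, inf_comm b0 a, horiz_mixed_inf hAB haA ha0 ha1 hb0B hb00 hb01] at h
  rcases h2 with ⟨x, hx, y, hy, hx0, hy0, hxy⟩ | ⟨x, hx, y, hy, hx1, hy1, hxy⟩
  · have hx1 : x ≠ ⊤ := fun h => hy0 (by rw [h, top_inf_eq] at hxy; exact hxy)
    have hy1 : y ≠ ⊤ := fun h => hx0 (by rw [h, inf_top_eq] at hxy; exact hxy)
    have h := (hθ.2 ⊤ x ⊤ y (hTb x hx hx0 hx1) (hTb y hy hy0 hy1)).2
    rw [top_inf_eq, hxy] at h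
    exact hθ.1.symm h
  · have hx0 : x ≠ ⊥ := fun h => hy1 (by rw [h, bot_sup_eq] at hxy; exact hxy)
    have hy0 : y ≠ ⊥ := fun h => hx1 (by rw [h, sup_bot_eq] at hxy; exact hxy)
    have h := (hθ.2 x ⊥ y ⊥ (haB x hx hx0 hx1) (haB y hy hy0 hy1)).1
    rw [hxy, bot_sup_eq] at h
    exact hθ.1.symm h

/-- If (`⊥` is meet-reducible in `A` or `⊤` is join-reducible in `B`) and (`⊥` is
meet-reducible in `B` or `⊤` is join-reducible in `A`), then every congruence of the
horizontal sum `A ⊞ B` other than the total one has singleton classes at `⊥` and `⊤`;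
in particular `A ⊞ B` has no two-class congruences and no prime filters. -/
theorem cong_horizSum_con01 {C : Type*} [Lattice C] [BoundedOrder C] (A B : Set C)
    (hAB : IsHorizSum A B) (hbt : (⊥ : C) ≠ ⊤)
    (hA : ∃ a ∈ A, a ≠ ⊥ ∧ a ≠ ⊤) (hB : ∃ b ∈ B, b ≠ ⊥ ∧ b ≠ ⊤)
    (h1 : (∃ x ∈ A, ∃ y ∈ A, x ≠ ⊥ ∧ y ≠ ⊥ ∧ x ⊓ y = ⊥) ∨
          (∃ x ∈ B, ∃ y ∈ B, x ≠ ⊤ ∧ y ≠ ⊤ ∧ x ⊔ y = ⊤))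
    (h2 : (∃ x ∈ B, ∃ y ∈ B, x ≠ ⊥ ∧ y ≠ ⊥ ∧ x ⊓ y = ⊥) ∨
          (∃ x ∈ A, ∃ y ∈ A, x ≠ ⊤ ∧ y ≠ ⊤ ∧ x ⊔ y = ⊤)) :
    (∀ θ : C → C → Prop, IsLatCong θ → (¬ ∀ x y : C, θ x y) →
      (∀ x : C, θ x ⊥ → x = ⊥) ∧ (∀ x : C, θ x ⊤ → x = ⊤)) ∧
    (¬ ∃ θ : C → C → Prop, IsLatCong θ ∧
      ∃ a b : C, ¬ θ a b ∧ ∀ x : C, θ x a ∨ θ x b) ∧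
    (∀ P : Set C, ¬ IsPrimeFilter P) := by
  -- collapsing ⊥ and ⊤ makes a congruence total
  have total : ∀ θ : C → C → Prop, IsLatCong θ → θ ⊥ ⊤ → ∀ x y : C, θ x y := by
    intro θ hθ h x y
    have hx : ∀ z : C, θ z ⊤ := by
      intro z
      have hz := (hθ.2 z z ⊥ ⊤ (hθ.1.refl z) h).1
      rwa [sup_bot_eq, sup_top_eq] at hz
    exact hθ.1.trans (hx x) (hθ.1.symm (hx y))
  -- a non-total congruence cannot relate a nonbot element to ⊥
  have key0 : ∀ θ : C → C → Prop, IsLatCong θ → ∀ c : C, c ≠ ⊥ → θ c ⊥ → θ ⊥ ⊤ := by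
    intro θ hθ c hc0 hcθ
    by_cases hc1 : c = ⊤
    · subst hc1; exact hθ.1.symm hcθ
    · have hcAB : c ∈ A ∪ B := by rw [hAB.union]; trivial
      rcases hcAB with hcA | hcB
      · exact horiz_spread hAB hB h2 hθ hcA hc0 hc1 hcθ
      · exact horiz_spread hAB.symm hA h1 hθ hcB hc0 hc1 hcθ
  have key1 : ∀ θ : C → C → Prop, IsLatCong θ → ∀ c : C, c ≠ ⊤ → θ c ⊤ → θ ⊥ ⊤ := by
    intro θ hθ c hc1 hcθ
    by_cases hc0 : c = ⊥
    · subst hc0; exact hcθ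
    · have hcAB : c ∈ A ∪ B := by rw [hAB.union]; trivial
      rcases hcAB with hcA | hcB
      · obtain ⟨b0, hb0B, hb00, hb01⟩ := hB
        have h := (hθ.2 c ⊤ b0 b0 hcθ (hθ.1.refl b0)).2
        rw [horiz_mixed_inf hAB hcA hc0 hc1 hb0B hb00 hb01, top_inf_eq] at h
        exact key0 θ hθ b0 hb00 (hθ.1.symm h)
      · obtain ⟨a0, ha0A, ha00, ha01⟩ := hA
        have h := (hθ.2 c ⊤ a0 a0 hcθ (hθ.1.refl a0)).2
        rw [inf_comm c a0, horiz_mixed_inf hAB ha0A ha00 ha01 hcB hc0 hc1, top_inf_eq] at h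
        exact key0 θ hθ a0 ha00 (hθ.1.symm h)
  have part1 : ∀ θ : C → C → Prop, IsLatCong θ → (¬ ∀ x y : C, θ x y) →
      (∀ x : C, θ x ⊥ → x = ⊥) ∧ (∀ x : C, θ x ⊤ → x = ⊤) := by
    intro θ hθ hnt
    constructor
    · intro x hx
      by_contra h
      exact hnt (total θ hθ (key0 θ hθ x h hx))
    · intro x hx
      by_contra h
      exact hnt (total θ hθ (key1 θ hθ x h hx))
  have part2 : ¬ ∃ θ : C → C → Prop, IsLatCong θ ∧
      ∃ a b : C, ¬ θ a b ∧ ∀ x : C, θ x a ∨ θ x b := by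
    rintro ⟨θ, hθ, a, b, hab, hcl⟩
    have hnt : ¬ ∀ x y : C, θ x y := fun h => hab (h a b)
    obtain ⟨h0, h1⟩ := part1 θ hθ hnt
    have hab' : (θ a ⊥ ∨ θ b ⊥) ∧ (θ a ⊤ ∨ θ b ⊤) := by
      rcases hcl ⊥ with h | h
      · rcases hcl ⊤ with h' | h'
        · exact absurd (hθ.1.trans h (hθ.1.symm h')) (fun hh => hbt (h0 ⊤ (hθ.1.symm hh)).symm)
        · exact ⟨Or.inl (hθ.1.symm h), Or.inr (hθ.1.symm h')⟩
      · rcases hcl ⊤ with h' | h'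
        · exact ⟨Or.inr (hθ.1.symm h), Or.inl (hθ.1.symm h')⟩
        · exact absurd (hθ.1.trans h (hθ.1.symm h')) (fun hh => hbt (h0 ⊤ (hθ.1.symm hh)).symm)
    obtain ⟨a0, ha0A, ha00, ha01⟩ := hA
    have hall : ∀ x : C, x = ⊥ ∨ x = ⊤ := by
      intro x
      rcases hab'.1 with hb0 | hb0 <;> rcases hab'.2 with ht1 | ht1
      · exact absurd (hθ.1.trans (hθ.1.symm hb0) ht1) (fun hh => hbt (h1 ⊥ hh))
      · rcases hcl x with h | h
        · exact Or.inl (h0 x (hθ.1.trans h hb0))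
        · exact Or.inr (h1 x (hθ.1.trans h ht1))
      · rcases hcl x with h | h
        · exact Or.inr (h1 x (hθ.1.trans h ht1))
        · exact Or.inl (h0 x (hθ.1.trans h hb0))
      · exact absurd (hθ.1.trans (hθ.1.symm hb0) ht1) (fun hh => hbt (h1 ⊥ hh))
    rcases hall a0 with h | h
    · exact ha00 h
    · exact ha01 h
  refine ⟨part1, part2, ?_⟩
  rintro P ⟨⟨⟨p, hp⟩, hup, hmeet⟩, hproper, hprime⟩
  set θ : C → C → Prop := fun x y => (x ∈ P ↔ y ∈ P) with hθdef
  have hsup : ∀ x y : C, x ⊔ y ∈ P ↔ (x ∈ P ∨ y ∈ P) := by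
    intro x y
    constructor
    · exact hprime x y
    · rintro (h | h)
      · exact hup x h _ le_sup_left
      · exact hup y h _ le_sup_right
  have hinf : ∀ x y : C, x ⊓ y ∈ P ↔ (x ∈ P ∧ y ∈ P) := by
    intro x y
    constructor
    · exact fun h => ⟨hup _ h x inf_le_left, hup _ h y inf_le_right⟩
    · exact fun h => hmeet x h.1 y h.2
  have hθc : IsLatCong θ := by
    refine ⟨⟨fun x => Iff.rfl, fun h => h.symm, fun h h' => h.trans h'⟩, ?_⟩
    intro a b c d hab hcd
    constructor
    · rw [hθdef]; simp only [hsup]; tauto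
    · rw [hθdef]; simp only [hinf]; tauto
  obtain ⟨q, hq⟩ : ∃ q : C, q ∉ P := by
    by_contra h
    push_neg at h
    exact hproper (Set.eq_univ_of_forall h)
  exact part2 ⟨θ, hθc, p, q, by simp [hθdef, hp, hq], fun x => by
    by_cases hx : x ∈ P
    · exact Or.inl (by simp [hθdef, hx, hp])
    · exact Or.inr (by simp [hθdef, hx, hq])⟩
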